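/- Let X₁, …, X_k be real random variables on a probability space and let δ > 0, ε > 0. Then P{max_{1≤i≤k} |∑_{j=1}^i (X_j − E[X_j 1_{{|X_j| ≤ δ}}])| > ε} ≤ P{max_{1≤i≤k} |∑_{j=1}^i (g_δ(X_j) − E g_δ(X_j))| > ε/2} + (1 + 4δ/ε) ∑_{j=1}^k P{|X_j| > δ}. -/

import Mathlib

open MeasureTheory Finset

/-- Truncation at level `ℓ`: `g_ℓ(x) = (x ∧ ℓ) ∨ (-ℓ)`. -/
noncomputable def truncAt (l x : ℝ) : ℝ := max (min x l) (-l)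

lemma abs_truncAt_le {l : ℝ} (hl : 0 ≤ l) (x : ℝ) : |truncAt l x| ≤ l := by
  rw [abs_le]
  exact ⟨le_max_right _ _, max_le (min_le_right _ _) (by linarith)⟩

lemma truncAt_eq_self {l x : ℝ} (hx : |x| ≤ l) : truncAt l x = x := by
  rw [abs_le] at hx
  unfold truncAt
  rw [min_eq_left hx.2, max_eq_left hx.1]

lemma integrable_of_bounded_meas {Ω : Type*} [MeasurableSpace Ω] {μ : Measure Ω}
    [IsFiniteMeasure μ] {f : Ω → ℝ} (hf : Measurable f) {C : ℝ}
    (hC : ∀ ω, |f ω| ≤ C) : Integrable f μ :=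
  ⟨hf.aestronglyMeasurable,
    HasFiniteIntegral.of_bounded (C := C) (ae_of_all _ fun ω => by
      simpa [Real.norm_eq_abs] using hC ω)⟩

lemma integral_trunc_diff_bound {Ω : Type*} [MeasurableSpace Ω] (μ : Measure Ω)
    [IsProbabilityMeasure μ] {f : Ω → ℝ} (hf : Measurable f) {δ : ℝ} (hδ : 0 < δ) :
    |(∫ ω, truncAt δ (f ω) ∂μ) - ∫ ω, (if |f ω| ≤ δ then f ω else 0) ∂μ|
      ≤ δ * (μ {ω | δ < |f ω|}).toReal := by
  have hS : MeasurableSet {ω | δ < |f ω|} := measurableSet_lt measurable_const hf.abs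
  have ht : Measurable (fun ω => truncAt δ (f ω)) :=
    (hf.min measurable_const).max measurable_const
  have hg : Measurable (fun ω => if |f ω| ≤ δ then f ω else 0) :=
    Measurable.ite (measurableSet_le hf.abs measurable_const) hf measurable_const
  have it : Integrable (fun ω => truncAt δ (f ω)) μ :=
    integrable_of_bounded_meas ht (fun ω => abs_truncAt_le hδ.le _)
  have ig : Integrable (fun ω => if |f ω| ≤ δ then f ω else 0) μ :=
    integrable_of_bounded_meas hg (fun ω => by
      by_cases h : |f ω| ≤ δ
      · simpa [h]
      · simp [h, hδ.le])
  have iind : Integrable (fun ω => Set.indicator {ω | δ < |f ω|} (fun _ => δ) ω) μ :=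
    integrable_of_bounded_meas (C := δ) (measurable_const.indicator hS) (fun ω => by
      by_cases h : ω ∈ {ω | δ < |f ω|}
      · simp [h, abs_of_nonneg hδ.le]
      · simp [h, hδ.le])
  rw [← integral_sub it ig]
  calc |∫ ω, (truncAt δ (f ω) - if |f ω| ≤ δ then f ω else 0) ∂μ|
      ≤ ∫ ω, |truncAt δ (f ω) - if |f ω| ≤ δ then f ω else 0| ∂μ :=
        by simpa [Real.norm_eq_abs] using
          norm_integral_le_integral_norm (μ := μ)
            (fun ω => truncAt δ (f ω) - if |f ω| ≤ δ then f ω else 0)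
    _ ≤ ∫ ω, Set.indicator {ω | δ < |f ω|} (fun _ => δ) ω ∂μ := by
        refine integral_mono (it.sub ig).abs iind fun ω => ?_
        by_cases h : |f ω| ≤ δ
        · have hnot : ω ∉ {ω | δ < |f ω|} := by simpa using h
          simp [truncAt_eq_self h, h, Set.indicator_of_notMem hnot]
        · have hin : ω ∈ {ω | δ < |f ω|} := by simpa using not_le.mp h
          simp only [if_neg h, sub_zero, Set.indicator_of_mem hin]
          exact abs_truncAt_le hδ.le _
    _ = δ * (μ {ω | δ < |f ω|}).toReal := by
        rw [integral_indicator_const _ hS, smul_eq_mul, mul_comm]; rfl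


/-- Decomposition estimate: the probability that the maximum of the centred partial sums
exceeds `ε` is bounded by the corresponding probability for the truncated variables plus
`(1 + 4δ/ε) ∑ P{|X_j| > δ}`. -/
theorem prob_max_partial_sum_le {Ω : Type*} [MeasurableSpace Ω]
    (μ : Measure Ω) [IsProbabilityMeasure μ]
    (k : ℕ) (hk : 1 ≤ k) (X : ℕ → Ω → ℝ) (hmeas : ∀ j ∈ Finset.Icc 1 k, Measurable (X j))
    (δ ε : ℝ) (hδ : 0 < δ) (hε : 0 < ε) :
    μ {ω | ∃ i ∈ Finset.Icc 1 k, ε <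
        |∑ j ∈ Finset.Icc 1 i,
          (X j ω - ∫ ω', (if |X j ω'| ≤ δ then X j ω' else 0) ∂μ)|}
      ≤ μ {ω | ∃ i ∈ Finset.Icc 1 k, ε / 2 <
          |∑ j ∈ Finset.Icc 1 i, (truncAt δ (X j ω) - ∫ ω', truncAt δ (X j ω') ∂μ)|}
        + ENNReal.ofReal (1 + 4 * δ / ε) *
          ∑ j ∈ Finset.Icc 1 k, μ {ω | δ < |X j ω|} := by
  set s : ℝ := ∑ j ∈ Finset.Icc 1 k, (μ {ω | δ < |X j ω|}).toReal with hs_def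
  have hs0 : 0 ≤ s := Finset.sum_nonneg fun j _ => ENNReal.toReal_nonneg
  have hsum_eq : ∑ j ∈ Finset.Icc 1 k, μ {ω | δ < |X j ω|} = ENNReal.ofReal s := by
    rw [hs_def, ENNReal.ofReal_sum_of_nonneg fun j _ => ENNReal.toReal_nonneg]
    exact Finset.sum_congr rfl fun j _ => (ENNReal.ofReal_toReal (measure_ne_top μ _)).symm
  by_cases hcase : δ * s ≤ ε / 2
  · have hsub : {ω | ∃ i ∈ Finset.Icc 1 k, ε <
        |∑ j ∈ Finset.Icc 1 i,
          (X j ω - ∫ ω', (if |X j ω'| ≤ δ then X j ω' else 0) ∂μ)|}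
        ⊆ {ω | ∃ i ∈ Finset.Icc 1 k, ε / 2 <
          |∑ j ∈ Finset.Icc 1 i, (truncAt δ (X j ω) - ∫ ω', truncAt δ (X j ω') ∂μ)|}
        ∪ ⋃ j ∈ Finset.Icc 1 k, {ω | δ < |X j ω|} := by
      intro ω hω
      by_cases hU : ω ∈ ⋃ j ∈ Finset.Icc 1 k, {ω | δ < |X j ω|}
      · exact Or.inr hU
      left
      simp only [Set.mem_iUnion, Set.mem_setOf_eq, not_exists, not_lt] at hU
      obtain ⟨i, hi, hgt⟩ := hω
      refine ⟨i, hi, ?_⟩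
      have hik : Finset.Icc 1 i ⊆ Finset.Icc 1 k :=
        Finset.Icc_subset_Icc le_rfl (Finset.mem_Icc.mp hi).2
      have hbdd : ∀ j ∈ Finset.Icc 1 i, |X j ω| ≤ δ := fun j hj => hU j (hik hj)
      have hrw : ∑ j ∈ Finset.Icc 1 i,
            (X j ω - ∫ ω', (if |X j ω'| ≤ δ then X j ω' else 0) ∂μ)
          = (∑ j ∈ Finset.Icc 1 i,
              (truncAt δ (X j ω) - ∫ ω', truncAt δ (X j ω') ∂μ))
            + ∑ j ∈ Finset.Icc 1 i,
              ((∫ ω', truncAt δ (X j ω') ∂μ)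
                - ∫ ω', (if |X j ω'| ≤ δ then X j ω' else 0) ∂μ) := by
        rw [← Finset.sum_add_distrib]
        refine Finset.sum_congr rfl fun j hj => ?_
        rw [truncAt_eq_self (hbdd j hj)]; ring
      have hb : |∑ j ∈ Finset.Icc 1 i,
            ((∫ ω', truncAt δ (X j ω') ∂μ)
              - ∫ ω', (if |X j ω'| ≤ δ then X j ω' else 0) ∂μ)| ≤ ε / 2 := by
        calc |∑ j ∈ Finset.Icc 1 i,
              ((∫ ω', truncAt δ (X j ω') ∂μ)
                - ∫ ω', (if |X j ω'| ≤ δ then X j ω' else 0) ∂μ)|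
            ≤ ∑ j ∈ Finset.Icc 1 i,
              |(∫ ω', truncAt δ (X j ω') ∂μ)
                - ∫ ω', (if |X j ω'| ≤ δ then X j ω' else 0) ∂μ| :=
              Finset.abs_sum_le_sum_abs _ _
          _ ≤ ∑ j ∈ Finset.Icc 1 i, δ * (μ {ω' | δ < |X j ω'|}).toReal :=
              Finset.sum_le_sum fun j hj =>
                integral_trunc_diff_bound μ (hmeas j (hik hj)) hδ
          _ ≤ ∑ j ∈ Finset.Icc 1 k, δ * (μ {ω' | δ < |X j ω'|}).toReal :=
              Finset.sum_le_sum_of_subset_of_nonneg hik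
                fun j _ _ => mul_nonneg hδ.le ENNReal.toReal_nonneg
          _ = δ * s := by rw [hs_def, Finset.mul_sum]
          _ ≤ ε / 2 := hcase
      rw [hrw] at hgt
      have habs := abs_add_le
        (∑ j ∈ Finset.Icc 1 i, (truncAt δ (X j ω) - ∫ ω', truncAt δ (X j ω') ∂μ))
        (∑ j ∈ Finset.Icc 1 i,
          ((∫ ω', truncAt δ (X j ω') ∂μ)
            - ∫ ω', (if |X j ω'| ≤ δ then X j ω' else 0) ∂μ))
      linarith
    refine le_trans (measure_mono hsub) (le_trans (measure_union_le _ _) ?_)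
    gcongr
    calc μ (⋃ j ∈ Finset.Icc 1 k, {ω | δ < |X j ω|})
        ≤ ∑ j ∈ Finset.Icc 1 k, μ {ω | δ < |X j ω|} := measure_biUnion_finset_le _ _
      _ ≤ ENNReal.ofReal (1 + 4 * δ / ε) * ∑ j ∈ Finset.Icc 1 k, μ {ω | δ < |X j ω|} := by
          refine le_mul_of_one_le_left zero_le ?_
          rw [← ENNReal.ofReal_one]
          refine ENNReal.ofReal_le_ofReal ?_
          have : 0 ≤ 4 * δ / ε := by positivity
          linarith
  · push_neg at hcase
    calc μ {ω | ∃ i ∈ Finset.Icc 1 k, ε <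
        |∑ j ∈ Finset.Icc 1 i,
          (X j ω - ∫ ω', (if |X j ω'| ≤ δ then X j ω' else 0) ∂μ)|}
        ≤ 1 := prob_le_one
      _ ≤ ENNReal.ofReal (1 + 4 * δ / ε) *
          ∑ j ∈ Finset.Icc 1 k, μ {ω | δ < |X j ω|} := by
          rw [hsum_eq, ← ENNReal.ofReal_mul (by positivity), ← ENNReal.ofReal_one]
          refine ENNReal.ofReal_le_ofReal ?_
          have h2 : 2 < 4 * (δ * s) / ε := by
            rw [lt_div_iff₀ hε]; nlinarith
          have hring : (1 + 4 * δ / ε) * s = s + 4 * (δ * s) / ε := by ring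
          nlinarith
      _ ≤ μ {ω | ∃ i ∈ Finset.Icc 1 k, ε / 2 <
          |∑ j ∈ Finset.Icc 1 i, (truncAt δ (X j ω) - ∫ ω', truncAt δ (X j ω') ∂μ)|}
        + ENNReal.ofReal (1 + 4 * δ / ε) *
          ∑ j ∈ Finset.Icc 1 k, μ {ω | δ < |X j ω|} := le_add_self
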